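/- arXiv:2203.08391 — 2 statements merged into one kernel-verified Lean document; each statement's English description precedes it below -/
import Mathlib

section
/- Let A be a square complex matrix indexed by a finite type D, let m ≥ 1 and σ ∈ Perm (Fin m), and let W_σ be the permutation operator on (Fin m → D) with entries W_σ(x,y) = 1 if x = y ∘ σ and 0 otherwise. Then trace(W_σ * A^{⊗m}) = ∏_{c ∈ cycleType(σ)} trace(A^c), the product running over the multiset of cycle lengths of σ (including fixed points as cycles of length 1). -/
open Matrix

/-- The `m`-fold tensor power of a square matrix, as a matrix on `Fin m → D`. -/
noncomputable def tensorPow {D : Type*} [Fintype D] (A : Matrix D D ℂ) (m : ℕ) :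
    Matrix (Fin m → D) (Fin m → D) ℂ :=
  Matrix.of fun x y => ∏ t, A (x t) (y t)

/-- The permutation operator `W_σ` on `m` copies: `W_σ(x,y) = 1` if `x = y ∘ σ`, else `0`. -/
noncomputable def permOp {D : Type*} [DecidableEq D] {m : ℕ} (σ : Equiv.Perm (Fin m)) :
    Matrix (Fin m → D) (Fin m → D) ℂ :=
  Matrix.of fun x y => if x = y ∘ σ then 1 else 0

set_option linter.unusedSectionVars false

section Helpers

variable {D : Type*} [Fintype D] [DecidableEq D] (A : Matrix D D ℂ)

lemma chain_shift (n : ℕ) (i : D) (w : Fin (n+2) → D) :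
    ∏ k : Fin (n+2), A ((Fin.cons i w : Fin (n+3) → D) k.castSucc)
        ((Fin.cons i w : Fin (n+3) → D) k.succ)
      = A i (w 0) * ∏ k : Fin (n+1), A (w k.castSucc) (w k.succ) := by
  rw [Fin.prod_univ_succ]
  congr 1

lemma pow_apply_path : ∀ (n : ℕ) (i j : D),
    (A ^ (n+1)) i j = ∑ y : Fin n → D, ∏ k : Fin (n+1),
      A ((Fin.cons i (Fin.snoc y j) : Fin (n+2) → D) k.castSucc)
        ((Fin.cons i (Fin.snoc y j) : Fin (n+2) → D) k.succ) := by
  intro n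
  induction n with
  | zero =>
    intro i j
    simp [Fin.snoc]
  | succ n ih =>
    intro i j
    rw [pow_succ', Matrix.mul_apply]
    simp_rw [ih]
    rw [← Equiv.sum_comp (Fin.consEquiv fun _ : Fin (n+1) => D)]
    rw [Fintype.sum_prod_type]
    refine Finset.sum_congr rfl fun f _ => ?_
    rw [Finset.mul_sum]
    refine Finset.sum_congr rfl fun y _ => ?_
    have hw : (Fin.snoc ((Fin.consEquiv fun _ : Fin (n+1) => D) (f, y)) j : Fin (n+2) → D)
        = (Fin.cons f (Fin.snoc y j) : Fin (n+2) → D) := by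
      show (Fin.snoc (Fin.cons f y) j : Fin (n+2) → D) = _
      rw [← Fin.cons_snoc_eq_snoc_cons]
    rw [hw, chain_shift]
    rw [Fin.cons_zero]

lemma cyclic_chain (n : ℕ) (d : D) (y : Fin n → D) :
    ∏ k : Fin (n+1), A ((Fin.cons d y : Fin (n+1) → D) k) ((Fin.cons d y : Fin (n+1) → D) (k+1))
      = ∏ k : Fin (n+1), A ((Fin.cons d (Fin.snoc y d) : Fin (n+2) → D) k.castSucc)
          ((Fin.cons d (Fin.snoc y d) : Fin (n+2) → D) k.succ) := by
  have hcast : ∀ k : Fin (n+1),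
      (Fin.cons d (Fin.snoc y d) : Fin (n+2) → D) k.castSucc
        = (Fin.cons d y : Fin (n+1) → D) k := by
    intro k
    induction k using Fin.cases with
    | zero => simp
    | succ l => rw [← Fin.succ_castSucc, Fin.cons_succ, Fin.snoc_castSucc, Fin.cons_succ]
  refine Finset.prod_congr rfl fun k _ => ?_
  congr 1
  · exact (hcast k).symm
  · induction k using Fin.lastCases with
    | last =>
      rw [Fin.succ_last, Fin.last_add_one, Fin.cons_zero, ← Fin.succ_last, Fin.cons_succ,
        Fin.snoc_last]
    | cast l =>
      rw [Fin.succ_castSucc, hcast l.succ, Fin.coeSucc_eq_succ]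

lemma cyclic_sum (n : ℕ) :
    ∑ y : Fin (n+1) → D, ∏ k : Fin (n+1), A (y k) (y (k+1)) = Matrix.trace (A ^ (n+1)) := by
  rw [Matrix.trace]
  simp_rw [Matrix.diag, pow_apply_path A n]
  have h1 : (∑ y : Fin (n+1) → D, ∏ k : Fin (n+1), A (y k) (y (k+1)))
      = ∑ p : D × (Fin n → D), ∏ k : Fin (n+1),
          A ((Fin.cons p.1 p.2 : Fin (n+1) → D) k)
            ((Fin.cons p.1 p.2 : Fin (n+1) → D) (k+1)) := by
    apply Fintype.sum_equiv ((Fin.consEquiv fun _ : Fin (n+1) => D).symm)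
    intro y
    simp only [Fin.consEquiv_symm_apply, Fin.cons_self_tail]
  rw [h1, Fintype.sum_prod_type]
  refine Finset.sum_congr rfl fun d _ => Finset.sum_congr rfl fun y _ => ?_
  exact cyclic_chain A n d y

lemma block_id {β : Type*} [Fintype β] [DecidableEq β] :
    ∑ x : β → D, ∏ t : β, A (x t) (x t) = Matrix.trace A ^ Fintype.card β := by
  rw [← Fintype.prod_sum fun (_ : β) (d : D) => A d d]
  rw [Finset.prod_const, Matrix.trace]
  rfl

lemma block_transport {β : Type*} [Fintype β] [DecidableEq β] (f : β → β) {n : ℕ} [NeZero n]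
    (e : Fin n ≃ β) (hf : ∀ k, f (e k) = e (k + 1)) :
    ∑ x : β → D, ∏ t : β, A (x t) (x (f t))
      = ∑ y : Fin n → D, ∏ k : Fin n, A (y k) (y (k + 1)) := by
  have h1 : ∑ x : β → D, ∏ t : β, A (x t) (x (f t))
      = ∑ y : Fin n → D, ∏ t : β, A (y (e.symm t)) (y (e.symm (f t))) := by
    apply Fintype.sum_equiv (Equiv.arrowCongr e (Equiv.refl D)).symm
    intro x
    simp [Equiv.arrowCongr]
  rw [h1]
  refine Finset.sum_congr rfl fun y _ => ?_
  rw [← Equiv.prod_comp e fun t => A (y (e.symm t)) (y (e.symm (f t)))]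
  refine Finset.prod_congr rfl fun k _ => ?_
  rw [Equiv.symm_apply_apply, hf k, Equiv.symm_apply_apply]

def fiberPiEquiv {α ι E : Type*} (π : α → ι) : (α → E) ≃ (∀ i, {a // π a = i} → E) where
  toFun x i t := x t.1
  invFun g a := g (π a) ⟨a, rfl⟩
  left_inv x := rfl
  right_inv g := by
    funext i t
    obtain ⟨a, rfl⟩ := t
    rfl

lemma split_sum {α ι : Type*} [Fintype α] [DecidableEq α] [Fintype ι] [DecidableEq ι]
    (σ : Equiv.Perm α) (π : α → ι) (hπ : ∀ a, π (σ a) = π a) :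
    ∑ x : α → D, ∏ t, A (x t) (x (σ t))
      = ∏ i, ∑ x : {a // π a = i} → D, ∏ t : {a // π a = i},
          A (x t) (x ⟨σ t, by rw [hπ]; exact t.2⟩) := by
  rw [Fintype.prod_sum]
  set E := (fiberPiEquiv π : (α → D) ≃ _) with hE
  have key : ∀ (g : ∀ i, {a // π a = i} → D) (a : α) (i : ι) (h : π a = i),
      g i ⟨a, h⟩ = g (π a) ⟨a, rfl⟩ := by
    intro g a i h
    subst h
    rfl
  apply Fintype.sum_equiv E
  intro x
  calc ∏ t : α, A (x t) (x (σ t))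
      = ∏ p : Σ i : ι, {a // π a = i},
          A (x ((Equiv.sigmaFiberEquiv π) p)) (x (σ ((Equiv.sigmaFiberEquiv π) p))) :=
        (Equiv.prod_comp (Equiv.sigmaFiberEquiv π) fun b => A (x b) (x (σ b))).symm
    _ = ∏ i : ι, ∏ t : {a // π a = i}, A (E x i t) (E x i ⟨σ t.1, by rw [hπ]; exact t.2⟩) := by
        rw [← Finset.univ_sigma_univ, Finset.prod_sigma]
        refine Finset.prod_congr rfl fun i _ => Finset.prod_congr rfl fun t _ => ?_
        obtain ⟨a, ha⟩ := t
        show A (x a) (x (σ a)) = A (E x i ⟨a, ha⟩) (E x i ⟨σ a, by rw [hπ]; exact ha⟩)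
        rw [key (E x) a i ha, key (E x) (σ a) i (by rw [hπ]; exact ha)]
        rfl

lemma trace_core {m : ℕ} (σ : Equiv.Perm (Fin m)) :
    Matrix.trace (permOp σ * tensorPow A m)
      = ∑ x : Fin m → D, ∏ t, A (x t) (x (σ t)) := by
  simp only [Matrix.trace, Matrix.diag, Matrix.mul_apply, permOp, tensorPow, Matrix.of_apply]
  refine Finset.sum_congr rfl fun x _ => ?_
  rw [Finset.sum_eq_single (x ∘ ⇑σ⁻¹)]
  · rw [if_pos (by funext t; simp), one_mul]
    rw [← Equiv.prod_comp σ fun t => A ((x ∘ ⇑σ⁻¹) t) (x t)]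
    refine Finset.prod_congr rfl fun t _ => ?_
    simp
  · intro y _ hy
    rw [if_neg, zero_mul]
    intro h
    apply hy
    funext t
    rw [h]
    simp
  · intro h
    exact absurd (Finset.mem_univ _) h

end Helpers

set_option maxHeartbeats 1000000 in
/-- `trace(W_σ * A^{⊗m})` equals the product of `trace(A^c)` over the cycle lengths `c`
of `σ`, with fixed points counted as cycles of length 1 (i.e. over the parts of the
partition associated to `σ`). -/
theorem trace_permOp_mul_tensorPow {D : Type*} [Fintype D] [DecidableEq D]
    (A : Matrix D D ℂ) (m : ℕ) (hm : 1 ≤ m) (σ : Equiv.Perm (Fin m)) :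
    Matrix.trace (permOp σ * tensorPow A m) =
      ((Equiv.Perm.partition σ).parts.map fun c => Matrix.trace (A ^ c)).prod := by
  classical
  rw [trace_core]
  set ι' := {c : Equiv.Perm (Fin m) // c ∈ σ.cycleFactorsFinset} with hι'
  set π : Fin m → Option ι' := fun a =>
    if h : σ.cycleOf a ∈ σ.cycleFactorsFinset then some ⟨σ.cycleOf a, h⟩ else none with hπdef
  have hπ : ∀ a, π (σ a) = π a := by
    intro a
    simp only [hπdef, Equiv.Perm.cycleOf_self_apply]
  rw [split_sum A σ π hπ, Fintype.prod_option]
  have hnone : ∀ a, π a = none ↔ a ∉ σ.support := by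
    intro a
    simp only [hπdef]
    by_cases h : σ.cycleOf a ∈ σ.cycleFactorsFinset
    · simp only [dif_pos h]
      simp only [Equiv.Perm.cycleOf_mem_cycleFactorsFinset_iff] at h
      simp [h]
    · simp only [dif_neg h]
      simp only [Equiv.Perm.cycleOf_mem_cycleFactorsFinset_iff] at h
      simp [h]
  have hsome : ∀ (c : ι') (a : Fin m), a ∈ c.1.support ↔ π a = some c := by
    intro c a
    constructor
    · intro ha
      have hc := Equiv.Perm.cycle_is_cycleOf ha c.2
      have hmem : a ∈ σ.support := by
        have h1 := (Equiv.Perm.mem_cycleFactorsFinset_iff.mp c.2).2 a ha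
        rw [Equiv.Perm.mem_support] at ha ⊢
        rwa [← h1]
      simp only [hπdef]
      rw [dif_pos (Equiv.Perm.cycleOf_mem_cycleFactorsFinset_iff.mpr hmem)]
      congr 1
      exact Subtype.ext hc.symm
    · intro h
      simp only [hπdef] at h
      by_cases hmem : σ.cycleOf a ∈ σ.cycleFactorsFinset
      · rw [dif_pos hmem] at h
        have : σ.cycleOf a = c.1 := congrArg Subtype.val (Option.some_injective _ h)
        rw [← this]
        rw [Equiv.Perm.mem_support_cycleOf_iff]
        exact ⟨Equiv.Perm.SameCycle.refl _ _,
          Equiv.Perm.cycleOf_mem_cycleFactorsFinset_iff.mp hmem⟩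
      · rw [dif_neg hmem] at h
        exact absurd h (Option.some_ne_none _).symm
  -- the fixed-point block
  have hb_none : (∑ x : {a // π a = none} → D, ∏ t : {a // π a = none},
        A (x t) (x ⟨σ t, by rw [hπ]; exact t.2⟩))
      = Matrix.trace A ^ (m - σ.support.card) := by
    have hfix : ∀ t : {a // π a = none}, σ t.1 = t.1 := by
      intro t
      have := (hnone t.1).mp t.2
      rwa [Equiv.Perm.notMem_support] at this
    have h1 : (∑ x : {a // π a = none} → D, ∏ t : {a // π a = none},
          A (x t) (x ⟨σ t, by rw [hπ]; exact t.2⟩))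
        = ∑ x : {a // π a = none} → D, ∏ t : {a // π a = none}, A (x t) (x t) := by
      refine Finset.sum_congr rfl fun x _ => Finset.prod_congr rfl fun t _ => ?_
      congr 2
      exact Subtype.ext (hfix t)
    rw [h1, block_id]
    congr 1
    rw [Fintype.card_congr (Equiv.subtypeEquivRight hnone)]
    rw [Fintype.card_subtype_compl, Fintype.card_fin, Fintype.card_coe]
  rw [hb_none]
  -- the cycle blocks
  have hb_cyc : ∀ c : ι', (∑ x : {a // π a = some c} → D, ∏ t : {a // π a = some c},
        A (x t) (x ⟨σ t, by rw [hπ]; exact t.2⟩))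
      = Matrix.trace (A ^ c.1.support.card) := by
    intro c
    have hcyc : c.1.IsCycle := (Equiv.Perm.mem_cycleFactorsFinset_iff.mp c.2).1
    have hord : orderOf c.1 = c.1.support.card := hcyc.orderOf
    obtain ⟨n, hn⟩ : ∃ n, c.1.support.card = n + 1 := by
      have h2 := hcyc.two_le_card_support
      exact ⟨c.1.support.card - 1, by omega⟩
    have hord' : orderOf c.1 = n + 1 := by rw [hord, hn]
    set e : Fin (n + 1) ≃ {a // π a = some c} :=
      (finCongr hord'.symm).trans ((finEquivZPowers (isOfFinOrder_of_finite c.1)).trans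
        (hcyc.zpowersEquivSupport.trans (Equiv.subtypeEquivRight (hsome c)))) with he
    have hval : ∀ k : Fin (n + 1),
        ((e k : {a // π a = some c}) : Fin m)
          = (c.1 ^ (k : ℕ)) (Classical.choose hcyc) := fun k => rfl
    have hf : ∀ k : Fin (n + 1),
        ((⟨σ (e k).1, by rw [hπ]; exact (e k).2⟩ : {a // π a = some c})) = e (k + 1) := by
      intro k
      apply Subtype.ext
      show σ (e k).1 = (e (k + 1)).1
      rw [hval k, hval (k + 1)]
      have ha₀ : (Classical.choose hcyc) ∈ c.1.support := by
        rw [Equiv.Perm.mem_support]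
        exact (Classical.choose_spec hcyc).1
      have hmem : (c.1 ^ (k : ℕ)) (Classical.choose hcyc) ∈ c.1.support := by
        rwa [Equiv.Perm.pow_apply_mem_support]
      have h1 : σ ((c.1 ^ (k : ℕ)) (Classical.choose hcyc))
          = c.1 ((c.1 ^ (k : ℕ)) (Classical.choose hcyc)) :=
        ((Equiv.Perm.mem_cycleFactorsFinset_iff.mp c.2).2 _ hmem).symm
      rw [h1, ← Equiv.Perm.mul_apply, ← pow_succ']
      have h2 : c.1 ^ ((k : ℕ) + 1) = c.1 ^ (((k + 1 : Fin (n + 1))) : ℕ) := by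
        apply pow_eq_pow_iff_modEq.mpr
        rw [hord']
        rw [Fin.add_def, Fin.val_one']
        exact (((Nat.ModEq.refl (k : ℕ)).add (Nat.mod_modEq 1 _).symm).trans
          (Nat.mod_modEq _ _).symm)
      rw [h2]
    rw [block_transport A (fun t : {a // π a = some c} =>
      (⟨σ t.1, by rw [hπ]; exact t.2⟩ : {a // π a = some c})) e hf]
    rw [hn]
    exact cyclic_sum A n
  have hprod : (∏ c : ι', ∑ x : {a // π a = some c} → D, ∏ t : {a // π a = some c},
        A (x t) (x ⟨σ t, by rw [hπ]; exact t.2⟩))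
      = ∏ c : ι', Matrix.trace (A ^ c.1.support.card) :=
    Finset.prod_congr rfl fun c _ => hb_cyc c
  rw [hprod]
  -- compute the right-hand side
  rw [Equiv.Perm.parts_partition, Multiset.map_add, Multiset.prod_add, Multiset.map_replicate,
    Multiset.prod_replicate, pow_one, Fintype.card_fin, mul_comm]
  congr 1
  rw [Equiv.Perm.cycleType_def, Multiset.map_map, ← Finset.prod_eq_multiset_prod]
  exact Finset.prod_coe_sort σ.cycleFactorsFinset
    fun c => Matrix.trace (A ^ c.support.card)
end

section
/- Let ρ be a biseparable tripartite density matrix on (Fin d × Fin d × Fin d): ρ is a finite convex combination ∑_i p_i ρ_i where each ρ_i is a Kronecker product of two density matrices across one of the three bipartitions A|BC, B|AC, or C|AB. For each of the three bipartitions g, let R_g be the realignment of ρ viewed as a bipartite matrix with parties g and its complement, and let σ^g : its singular values (nonnegative square roots of the eigenvalues of R_g R_gᴴ). Then for every choice of finite index sets S₁, S₂, S₃ with |S_g| ≤ d² for each bipartition, ∑_{g=1}^{3} ∑_{i ∈ S_g} σ^g_i ≤ 2d + 1. Equivalently, the sum over the three bipartitions of the Ky Fan d²-norms of the realignments of a biseparable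 tripartite state is at most 2d + 1 (so the sum over all six ordered proper subsets is at most 4d + 2). -/
open Matrix ComplexOrder

/-- The realignment of a bipartite matrix on `X × Y`. -/
noncomputable def realign {X Y : Type*} (ρ : Matrix (X × Y) (X × Y) ℂ) :
    Matrix (X × X) (Y × Y) ℂ :=
  Matrix.of fun p q => ρ (p.1, q.1) (p.2, q.2)

/-- A density matrix: positive semidefinite with trace 1. -/
def IsDensity {X : Type*} [Fintype X] (M : Matrix X X ℂ) : Prop :=
  M.PosSemidef ∧ M.trace = 1

/-- Reindexing of a tripartite matrix to the bipartition `B|AC`. -/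
noncomputable def reindexBAC {d : ℕ}
    (ρ : Matrix (Fin d × Fin d × Fin d) (Fin d × Fin d × Fin d) ℂ) :
    Matrix (Fin d × Fin d × Fin d) (Fin d × Fin d × Fin d) ℂ :=
  Matrix.of fun x y => ρ (x.2.1, x.1, x.2.2) (y.2.1, y.1, y.2.2)

/-- Reindexing of a tripartite matrix to the bipartition `C|AB`. -/
noncomputable def reindexCAB {d : ℕ}
    (ρ : Matrix (Fin d × Fin d × Fin d) (Fin d × Fin d × Fin d) ℂ) :
    Matrix (Fin d × Fin d × Fin d) (Fin d × Fin d × Fin d) ℂ :=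
  Matrix.of fun x y => ρ (x.2.1, x.2.2, x.1) (y.2.1, y.2.2, y.1)

/-- Product state across the bipartition `A|BC`. -/
noncomputable def prodA_BC {d : ℕ} (M₁ : Matrix (Fin d) (Fin d) ℂ)
    (M₂ : Matrix (Fin d × Fin d) (Fin d × Fin d) ℂ) :
    Matrix (Fin d × Fin d × Fin d) (Fin d × Fin d × Fin d) ℂ :=
  Matrix.of fun x y => M₁ x.1 y.1 * M₂ x.2 y.2

/-- Product state across the bipartition `B|AC`. -/
noncomputable def prodB_AC {d : ℕ} (M₁ : Matrix (Fin d) (Fin d) ℂ)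
    (M₂ : Matrix (Fin d × Fin d) (Fin d × Fin d) ℂ) :
    Matrix (Fin d × Fin d × Fin d) (Fin d × Fin d × Fin d) ℂ :=
  Matrix.of fun x y => M₁ x.2.1 y.2.1 * M₂ (x.1, x.2.2) (y.1, y.2.2)

/-- Product state across the bipartition `C|AB`. -/
noncomputable def prodC_AB {d : ℕ} (M₁ : Matrix (Fin d) (Fin d) ℂ)
    (M₂ : Matrix (Fin d × Fin d) (Fin d × Fin d) ℂ) :
    Matrix (Fin d × Fin d × Fin d) (Fin d × Fin d × Fin d) ℂ :=
  Matrix.of fun x y => M₁ x.2.2 y.2.2 * M₂ (x.1, x.2.1) (y.1, y.2.1)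

noncomputable section Aux

namespace KyFanAux

variable {m n : Type*} [Fintype m] [Fintype n]

/-- squared ℓ² norm of a complex vector -/
def nsq (v : n → ℂ) : ℝ := ∑ i, Complex.normSq (v i)

lemma nsq_nonneg (v : n → ℂ) : 0 ≤ nsq v :=
  Finset.sum_nonneg fun _ _ => Complex.normSq_nonneg _

lemma dot_self (v : n → ℂ) : star v ⬝ᵥ v = (nsq v : ℂ) := by
  simp only [dotProduct, Pi.star_apply, nsq, Complex.ofReal_sum]
  refine Finset.sum_congr rfl fun i _ => ?_
  rw [mul_comm, RCLike.star_def, Complex.mul_conj]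

lemma nsq_eq_zero {v : n → ℂ} (h : nsq v = 0) : v = 0 := by
  funext i
  have := (Finset.sum_eq_zero_iff_of_nonneg (fun i _ => Complex.normSq_nonneg (v i))).1 h i
    (Finset.mem_univ i)
  simpa [Complex.normSq_eq_zero] using this

lemma dot_conj (x : n → ℂ) (y : n → ℂ) :
    star x ⬝ᵥ y = (starRingEnd ℂ) (star y ⬝ᵥ x) := by
  simp only [dotProduct, map_sum, _root_.map_mul, Pi.star_apply]
  refine Finset.sum_congr rfl fun i _ => ?_
  simp [Complex.conj_conj, mul_comm, RCLike.star_def]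

lemma sum_dot {ι : Type*} (s : Finset ι) (f : ι → n → ℂ) (v : n → ℂ) :
    (∑ i ∈ s, f i) ⬝ᵥ v = ∑ i ∈ s, f i ⬝ᵥ v := by
  simp only [dotProduct, Finset.sum_apply, Finset.sum_mul]
  exact Finset.sum_comm

lemma dot_sum {ι : Type*} (s : Finset ι) (v : n → ℂ) (f : ι → n → ℂ) :
    v ⬝ᵥ (∑ i ∈ s, f i) = ∑ i ∈ s, v ⬝ᵥ f i := by
  simp only [dotProduct, Finset.sum_apply, Finset.mul_sum]
  exact Finset.sum_comm

/-- Bessel's inequality for a pairwise orthogonal family with norms at most 1. -/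
lemma bessel {ι : Type*} [Fintype ι] (w : ι → n → ℂ)
    (horth : ∀ i j, i ≠ j → star (w i) ⬝ᵥ w j = 0)
    (hnorm : ∀ i, nsq (w i) ≤ 1) (v : n → ℂ) :
    ∑ i, Complex.normSq (star (w i) ⬝ᵥ v) ≤ nsq v := by
  set d : ι → ℂ := fun i => star (w i) ⬝ᵥ v with hd
  set z : n → ℂ := ∑ i, d i • w i with hz
  have hzv : star z ⬝ᵥ v = ((∑ i, Complex.normSq (d i) : ℝ) : ℂ) := by
    rw [hz]
    push_cast
    rw [star_sum, sum_dot]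
    refine Finset.sum_congr rfl fun i _ => ?_
    rw [star_smul, smul_dotProduct]
    show star (d i) • d i = _
    simp [RCLike.star_def, smul_eq_mul, Complex.normSq_eq_conj_mul_self]
  have hvz : star v ⬝ᵥ z = ((∑ i, Complex.normSq (d i) : ℝ) : ℂ) := by
    rw [dot_conj, hzv]
    simp
  have hzzc : star z ⬝ᵥ z = ((∑ i, Complex.normSq (d i) * nsq (w i) : ℝ) : ℂ) := by
    rw [hz, star_sum, sum_dot]
    push_cast
    refine Finset.sum_congr rfl fun i _ => ?_
    rw [star_smul, smul_dotProduct, dot_sum]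
    rw [Finset.sum_eq_single i]
    · rw [dotProduct_smul, dot_self]
      simp only [smul_eq_mul, RCLike.star_def]
      rw [Complex.normSq_eq_conj_mul_self]
      ring
    · intro j _ hji
      rw [dotProduct_smul, horth i j (Ne.symm hji)]
      simp
    · intro h; exact absurd (Finset.mem_univ i) h
  have hzz : nsq z ≤ ∑ i, Complex.normSq (d i) := by
    have h1 : (nsq z : ℂ) = ((∑ i, Complex.normSq (d i) * nsq (w i) : ℝ) : ℂ) := by
      rw [← dot_self, hzzc]
    have h2 : nsq z = ∑ i, Complex.normSq (d i) * nsq (w i) := by exact_mod_cast h1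
    rw [h2]
    refine Finset.sum_le_sum fun i _ => ?_
    calc Complex.normSq (d i) * nsq (w i) ≤ Complex.normSq (d i) * 1 :=
          mul_le_mul_of_nonneg_left (hnorm i) (Complex.normSq_nonneg _)
      _ = _ := mul_one _
  have key : 0 ≤ (star (v - z) ⬝ᵥ (v - z)).re := by
    rw [dot_self]
    exact_mod_cast nsq_nonneg _
  have expand : star (v - z) ⬝ᵥ (v - z)
      = star v ⬝ᵥ v - star z ⬝ᵥ v - star v ⬝ᵥ z + star z ⬝ᵥ z := by
    rw [star_sub, sub_dotProduct, dotProduct_sub, dotProduct_sub]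
    ring
  rw [expand] at key
  have hzzre : (star z ⬝ᵥ z).re = nsq z := by rw [dot_self]; simp
  simp only [Complex.add_re, Complex.sub_re, hzv, hvz, dot_self, Complex.ofReal_re, hzzre] at key
  have : ∑ i, Complex.normSq (star (w i) ⬝ᵥ v) = ∑ i, Complex.normSq (d i) := rfl
  rw [this]
  linarith [hzz, key]



variable {m n : Type*} [Fintype m] [Fintype n] [DecidableEq m]

/-- Sum of singular values of `A` (square roots of eigenvalues of `A Aᴴ`). -/
noncomputable def singSum (A : Matrix m n ℂ) : ℝ :=
  ∑ i, Real.sqrt ((isHermitian_mul_conjTranspose_self A).eigenvalues i)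

lemma svd_exists (A : Matrix m n ℂ) :
    ∃ (x : m → m → ℂ) (y : m → n → ℂ),
      (∀ i j, star (x i) ⬝ᵥ x j = if i = j then 1 else 0) ∧
      (∀ i j, i ≠ j → star (y i) ⬝ᵥ y j = 0) ∧
      (∀ i, star (y i) ⬝ᵥ y i
        = (if (isHermitian_mul_conjTranspose_self A).eigenvalues i = 0 then 0 else 1 : ℂ)) ∧
      (∀ p q, A p q = ∑ k,
        ((Real.sqrt ((isHermitian_mul_conjTranspose_self A).eigenvalues k) : ℂ)
          * (x k p * (starRingEnd ℂ) (y k q)))) ∧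
      (∀ k, star (x k) ⬝ᵥ (A *ᵥ y k)
        = (Real.sqrt ((isHermitian_mul_conjTranspose_self A).eigenvalues k) : ℂ)) := by
  classical
  set hH := isHermitian_mul_conjTranspose_self A with hHdef
  set lam := hH.eigenvalues with hlam
  have hlam_nonneg : ∀ k, 0 ≤ lam k := fun k =>
    (posSemidef_self_mul_conjTranspose A).eigenvalues_nonneg k
  set x : m → m → ℂ := fun k => ⇑(hH.eigenvectorBasis k) with hx
  have hxorth : ∀ i j, star (x i) ⬝ᵥ x j = if i = j then 1 else 0 := by
    intro i j
    have := hH.eigenvectorBasis.orthonormal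
    rw [orthonormal_iff_ite] at this
    have h := this i j
    rw [EuclideanSpace.inner_eq_star_dotProduct, dotProduct_comm] at h
    exact h
  have heig : ∀ k, (A * Aᴴ) *ᵥ x k = (lam k : ℂ) • x k := by
    intro k
    have := hH.mulVec_eigenvectorBasis k
    convert this using 1
    exact (RCLike.real_smul_eq_coe_smul (K := ℂ) _ _).symm
  -- key inner products
  have hAA : ∀ j k, star (Aᴴ *ᵥ x j) ⬝ᵥ (Aᴴ *ᵥ x k)
      = (lam k : ℂ) * (if j = k then 1 else 0) := by
    intro j k
    rw [star_mulVec, conjTranspose_conjTranspose, ← dotProduct_mulVec,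
      mulVec_mulVec, heig k, dotProduct_smul]
    rw [hxorth j k]
    simp [smul_eq_mul]
  set y : m → n → ℂ := fun k => (((Real.sqrt (lam k))⁻¹ : ℝ) : ℂ) • (Aᴴ *ᵥ x k) with hy
  have hyval : ∀ i j, star (y i) ⬝ᵥ y j
      = ((((Real.sqrt (lam i))⁻¹ : ℝ) : ℂ) * (((Real.sqrt (lam j))⁻¹ : ℝ) : ℂ))
        * ((lam j : ℂ) * (if i = j then 1 else 0)) := by
    intro i j
    rw [hy]
    simp only [star_smul, smul_dotProduct, dotProduct_smul, hAA i j, RCLike.star_def,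
      Complex.conj_ofReal, smul_eq_mul]
    ring
  have hyorth : ∀ i j, i ≠ j → star (y i) ⬝ᵥ y j = 0 := by
    intro i j hij
    rw [hyval i j, if_neg hij]
    simp
  have hynorm : ∀ i, star (y i) ⬝ᵥ y i = (if lam i = 0 then 0 else 1 : ℂ) := by
    intro i
    rw [hyval i i, if_pos rfl]
    by_cases h : lam i = 0
    · simp [h]
    · have hs : Real.sqrt (lam i) ≠ 0 := by
        have hpos : 0 < lam i := lt_of_le_of_ne (hlam_nonneg i) (Ne.symm h)
        positivity
      rw [if_neg h, mul_one]
      have : (((Real.sqrt (lam i))⁻¹ * (Real.sqrt (lam i))⁻¹ * lam i : ℝ) : ℂ) = 1 := by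
        norm_cast
        field_simp
        rw [Real.sq_sqrt (hlam_nonneg i)]
      rw [← this]
      push_cast
      ring
  -- Aᴴ *ᵥ x k = √(lam k) • y k
  have hAy : ∀ k, Aᴴ *ᵥ x k = ((Real.sqrt (lam k) : ℝ) : ℂ) • y k := by
    intro k
    by_cases h : lam k = 0
    · have hz : Aᴴ *ᵥ x k = 0 := by
        have h0 : star (Aᴴ *ᵥ x k) ⬝ᵥ (Aᴴ *ᵥ x k) = 0 := by
          rw [hAA k k, if_pos rfl, h]; simp
        have := dot_self (Aᴴ *ᵥ x k)
        rw [h0] at this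
        exact nsq_eq_zero (by exact_mod_cast this.symm)
      rw [hz, hy]
      simp [hz]
    · have hs : Real.sqrt (lam k) ≠ 0 := by
        have hpos : 0 < lam k := lt_of_le_of_ne (hlam_nonneg k) (Ne.symm h)
        positivity
      rw [hy]
      rw [smul_smul]
      have : ((Real.sqrt (lam k) : ℝ) : ℂ) * (((Real.sqrt (lam k))⁻¹ : ℝ) : ℂ) = 1 := by
        norm_cast
        field_simp
      rw [this, one_smul]
  -- decomposition: A = ∑ √λ_k x_k y_kᴴ
  set U : Matrix m m ℂ := (hH.eigenvectorUnitary : Matrix m m ℂ) with hUdef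
  have hUU : U * star U = 1 := (Matrix.mem_unitaryGroup_iff).mp (hH.eigenvectorUnitary).2
  have hUx : ∀ r k, U r k = x k r := fun r k => rfl
  have hdecomp : ∀ p q, A p q
      = ∑ k, ((Real.sqrt (lam k) : ℂ) * (x k p * (starRingEnd ℂ) (y k q))) := by
    intro p q
    have hstar : ∀ k, (star U * A) k q = (starRingEnd ℂ) ((Aᴴ *ᵥ x k) q) := by
      intro k
      rw [mul_apply]
      have : (Aᴴ *ᵥ x k) q = ∑ r, Aᴴ q r * x k r := rfl
      rw [this, map_sum]
      refine Finset.sum_congr rfl fun r _ => ?_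
      rw [Matrix.star_eq_conjTranspose, Matrix.conjTranspose_apply, Matrix.conjTranspose_apply,
        _root_.map_mul, hUx r k]
      simp only [RCLike.star_def, Complex.conj_conj]
      ring
    have h0 : A p q = ((U * star U) * A) p q := by rw [hUU, Matrix.one_mul]
    rw [h0, Matrix.mul_assoc, mul_apply]
    refine Finset.sum_congr rfl fun k _ => ?_
    rw [hstar k, hAy k, hUx p k]
    simp only [Pi.smul_apply, smul_eq_mul, _root_.map_mul, RCLike.star_def, Complex.conj_ofReal]
    ring
  have hattain : ∀ k, star (x k) ⬝ᵥ (A *ᵥ y k) = ((Real.sqrt (lam k) : ℝ) : ℂ) := by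
    intro k
    rw [hy]
    rw [Matrix.mulVec_smul, mulVec_mulVec, dotProduct_smul, heig k, dotProduct_smul,
      hxorth k k, if_pos rfl]
    simp only [smul_eq_mul, mul_one]
    by_cases h : lam k = 0
    · simp [h]
    · have hs : Real.sqrt (lam k) ≠ 0 := by
        have hpos : 0 < lam k := lt_of_le_of_ne (hlam_nonneg k) (Ne.symm h)
        positivity
      have : (((Real.sqrt (lam k))⁻¹ * lam k : ℝ) : ℂ) = ((Real.sqrt (lam k) : ℝ) : ℂ) := by
        norm_cast
        field_simp
        rw [Real.sq_sqrt (hlam_nonneg k)]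
      rw [← this]
      push_cast
      ring
  exact ⟨x, y, hxorth, hyorth, hynorm, hdecomp, hattain⟩

lemma sum_mulVec {ι : Type*} (s : Finset ι) (M : ι → Matrix m n ℂ) (v : n → ℂ) :
    (∑ j ∈ s, M j) *ᵥ v = ∑ j ∈ s, (M j) *ᵥ v := by
  funext i
  simp only [mulVec, dotProduct, Matrix.sum_apply, Finset.sum_apply, Finset.sum_mul]
  exact Finset.sum_comm

lemma upper_bound (A : Matrix m n ℂ) {ι : Type*} [Fintype ι]
    (u : ι → m → ℂ) (w : ι → n → ℂ)
    (huorth : ∀ i j, i ≠ j → star (u i) ⬝ᵥ u j = 0) (hunorm : ∀ i, nsq (u i) ≤ 1)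
    (hworth : ∀ i j, i ≠ j → star (w i) ⬝ᵥ w j = 0) (hwnorm : ∀ i, nsq (w i) ≤ 1) :
    ∑ i, (star (u i) ⬝ᵥ (A *ᵥ w i)).re ≤ singSum A := by
  classical
  obtain ⟨x, y, hxorth, hyorth, hynorm, hdecomp, _⟩ := svd_exists A
  set lam := (isHermitian_mul_conjTranspose_self A).eigenvalues with hlam
  have hlam_nonneg : ∀ k, 0 ≤ lam k := fun k =>
    (posSemidef_self_mul_conjTranspose A).eigenvalues_nonneg k
  have hnsqx : ∀ k, nsq (x k) = 1 := by
    intro k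
    have h := hxorth k k
    rw [if_pos rfl, dot_self] at h
    exact_mod_cast h
  have hnsqy : ∀ k, nsq (y k) ≤ 1 := by
    intro k
    have h := hynorm k
    rw [dot_self] at h
    by_cases h0 : lam k = 0
    · rw [if_pos h0] at h
      have : nsq (y k) = 0 := by exact_mod_cast h
      rw [this]; norm_num
    · rw [if_neg h0] at h
      exact le_of_eq (by exact_mod_cast h)
  have hexp : ∀ i, star (u i) ⬝ᵥ (A *ᵥ w i)
      = ∑ k, (Real.sqrt (lam k) : ℂ) * ((star (u i) ⬝ᵥ x k) * (star (y k) ⬝ᵥ w i)) := by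
    intro i
    have e1 : star (u i) ⬝ᵥ (A *ᵥ w i)
        = ∑ p, ∑ q, ∑ k, (Real.sqrt (lam k) : ℂ)
            * ((star (u i p) * x k p) * ((starRingEnd ℂ) (y k q) * w i q)) := by
      simp only [dotProduct, mulVec, Pi.star_apply, Finset.mul_sum]
      refine Finset.sum_congr rfl fun p _ => Finset.sum_congr rfl fun q _ => ?_
      rw [hdecomp p q, Finset.sum_mul, Finset.mul_sum]
      exact Finset.sum_congr rfl fun k _ => by ring
    have e2 : ∑ p, ∑ q, ∑ k, (Real.sqrt (lam k) : ℂ)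
            * ((star (u i p) * x k p) * ((starRingEnd ℂ) (y k q) * w i q))
        = ∑ k, ∑ p, ∑ q, (Real.sqrt (lam k) : ℂ)
            * ((star (u i p) * x k p) * ((starRingEnd ℂ) (y k q) * w i q)) := by
      rw [show (∑ p, ∑ q, ∑ k, (Real.sqrt (lam k) : ℂ)
            * ((star (u i p) * x k p) * ((starRingEnd ℂ) (y k q) * w i q)))
          = ∑ p, ∑ k, ∑ q, (Real.sqrt (lam k) : ℂ)
            * ((star (u i p) * x k p) * ((starRingEnd ℂ) (y k q) * w i q))
        from Finset.sum_congr rfl fun p _ => Finset.sum_comm]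
      exact Finset.sum_comm
    rw [e1, e2]
    refine Finset.sum_congr rfl fun k _ => ?_
    simp only [dotProduct, Pi.star_apply, RCLike.star_def]
    rw [Finset.sum_mul_sum, Finset.mul_sum]
    refine Finset.sum_congr rfl fun p _ => ?_
    rw [Finset.mul_sum]
  have hmain : ∑ i, (star (u i) ⬝ᵥ (A *ᵥ w i)).re
      ≤ ∑ i, ∑ k, Real.sqrt (lam k)
          * ((Complex.normSq (star (u i) ⬝ᵥ x k) + Complex.normSq (star (w i) ⬝ᵥ y k)) / 2) := by
    refine Finset.sum_le_sum fun i _ => ?_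
    rw [hexp i, Complex.re_sum]
    refine Finset.sum_le_sum fun k _ => ?_
    set a := star (u i) ⬝ᵥ x k with ha
    set b := star (y k) ⬝ᵥ w i with hb
    have h1 : ((Real.sqrt (lam k) : ℂ) * (a * b)).re
        ≤ ‖(Real.sqrt (lam k) : ℂ) * (a * b)‖ := Complex.re_le_norm _
    have h2 : ‖(Real.sqrt (lam k) : ℂ) * (a * b)‖
        = Real.sqrt (lam k) * (‖a‖ * ‖b‖) := by
      rw [norm_mul, norm_mul, Complex.norm_real, Real.norm_eq_abs,
        abs_of_nonneg (Real.sqrt_nonneg _)]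
    have h3 : ‖a‖ * ‖b‖
        ≤ (Complex.normSq a + Complex.normSq b) / 2 := by
      rw [← Complex.sq_norm, ← Complex.sq_norm]
      nlinarith [sq_nonneg (‖a‖ - ‖b‖)]
    have h4 : Complex.normSq b = Complex.normSq (star (w i) ⬝ᵥ y k) := by
      rw [hb, dot_conj (y k) (w i)]
      exact Complex.normSq_conj _
    calc ((Real.sqrt (lam k) : ℂ) * (a * b)).re
        ≤ Real.sqrt (lam k) * (‖a‖ * ‖b‖) := h2 ▸ h1
      _ ≤ Real.sqrt (lam k) * ((Complex.normSq a + Complex.normSq b) / 2) :=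
          mul_le_mul_of_nonneg_left h3 (Real.sqrt_nonneg _)
      _ = _ := by rw [h4]
  have hswap : ∑ i, ∑ k, Real.sqrt (lam k)
      * ((Complex.normSq (star (u i) ⬝ᵥ x k) + Complex.normSq (star (w i) ⬝ᵥ y k)) / 2)
      = ∑ k, Real.sqrt (lam k)
        * (((∑ i, Complex.normSq (star (u i) ⬝ᵥ x k))
            + ∑ i, Complex.normSq (star (w i) ⬝ᵥ y k)) / 2) := by
    rw [Finset.sum_comm]
    refine Finset.sum_congr rfl fun k _ => ?_
    rw [← Finset.mul_sum]
    congr 1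
    rw [← Finset.sum_div, Finset.sum_add_distrib]
  refine hmain.trans ?_
  rw [hswap]
  refine (Finset.sum_le_sum fun k _ => ?_).trans
    (le_of_eq (Finset.sum_congr rfl fun k _ => mul_one (Real.sqrt (lam k))))
  have b1 : ∑ i, Complex.normSq (star (u i) ⬝ᵥ x k) ≤ 1 := by
    have := bessel u huorth hunorm (x k)
    rw [hnsqx k] at this
    exact this
  have b2 : ∑ i, Complex.normSq (star (w i) ⬝ᵥ y k) ≤ 1 :=
    (bessel w hworth hwnorm (y k)).trans (hnsqy k)
  have : ((∑ i, Complex.normSq (star (u i) ⬝ᵥ x k))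
      + ∑ i, Complex.normSq (star (w i) ⬝ᵥ y k)) / 2 ≤ 1 := by linarith
  exact mul_le_mul_of_nonneg_left this (Real.sqrt_nonneg _)

lemma singSum_sum_smul_le {ι : Type*} (s : Finset ι) (c : ι → ℝ) (hc : ∀ j ∈ s, 0 ≤ c j)
    (B : ι → Matrix m n ℂ) :
    singSum (∑ j ∈ s, (c j : ℂ) • B j) ≤ ∑ j ∈ s, c j * singSum (B j) := by
  classical
  set A := ∑ j ∈ s, (c j : ℂ) • B j with hA
  obtain ⟨x, y, hxorth, hyorth, hynorm, hdecomp, hattain⟩ := svd_exists A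
  have hnsqx : ∀ k, nsq (x k) ≤ 1 := by
    intro k
    have h := hxorth k k
    rw [if_pos rfl, dot_self] at h
    exact le_of_eq (by exact_mod_cast h)
  have hxorth' : ∀ i j, i ≠ j → star (x i) ⬝ᵥ x j = 0 := by
    intro i j hij; rw [hxorth i j, if_neg hij]
  have hnsqy : ∀ k, nsq (y k) ≤ 1 := by
    intro k
    have h := hynorm k
    rw [dot_self] at h
    by_cases h0 : (isHermitian_mul_conjTranspose_self A).eigenvalues k = 0
    · rw [if_pos h0] at h
      have : nsq (y k) = 0 := by exact_mod_cast h
      rw [this]; norm_num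
    · rw [if_neg h0] at h
      exact le_of_eq (by exact_mod_cast h)
  have heq : singSum A = ∑ k, (star (x k) ⬝ᵥ (A *ᵥ y k)).re := by
    unfold singSum
    refine Finset.sum_congr rfl fun k _ => ?_
    rw [hattain k]
    simp
  rw [heq]
  have hexpand : ∀ k, (star (x k) ⬝ᵥ (A *ᵥ y k)).re
      = ∑ j ∈ s, c j * (star (x k) ⬝ᵥ (B j *ᵥ y k)).re := by
    intro k
    rw [hA, sum_mulVec, dot_sum]
    rw [Complex.re_sum]
    refine Finset.sum_congr rfl fun j _ => ?_
    rw [smul_mulVec, dotProduct_smul]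
    rw [smul_eq_mul, Complex.re_ofReal_mul]
  calc ∑ k, (star (x k) ⬝ᵥ (A *ᵥ y k)).re
      = ∑ k, ∑ j ∈ s, c j * (star (x k) ⬝ᵥ (B j *ᵥ y k)).re :=
        Finset.sum_congr rfl fun k _ => hexpand k
    _ = ∑ j ∈ s, c j * ∑ k, (star (x k) ⬝ᵥ (B j *ᵥ y k)).re := by
        rw [Finset.sum_comm]
        exact Finset.sum_congr rfl fun j _ => (Finset.mul_sum _ _ _).symm
    _ ≤ ∑ j ∈ s, c j * singSum (B j) := by
        refine Finset.sum_le_sum fun j hj => ?_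
        exact mul_le_mul_of_nonneg_left
          (upper_bound (B j) x y hxorth' hnsqx hyorth hnsqy) (hc j hj)

/-- Squared Frobenius norm. -/
def frobSq (A : Matrix m n ℂ) : ℝ := ∑ p, ∑ q, Complex.normSq (A p q)

lemma frobSq_nonneg (A : Matrix m n ℂ) : 0 ≤ frobSq A :=
  Finset.sum_nonneg fun _ _ => Finset.sum_nonneg fun _ _ => Complex.normSq_nonneg _

lemma trace_eq_sum_eigenvalues {M : Matrix m m ℂ} (hM : M.IsHermitian) :
    M.trace = ∑ i, (hM.eigenvalues i : ℂ) := by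
  nth_rewrite 1 [show M = (hM.eigenvectorUnitary : Matrix m m ℂ) * diagonal (RCLike.ofReal ∘ hM.eigenvalues) * star (hM.eigenvectorUnitary : Matrix m m ℂ) from hM.spectral_theorem]
  rw [Matrix.trace_mul_cycle]
  rw [(Matrix.mem_unitaryGroup_iff'.mp (hM.eigenvectorUnitary).2),
    Matrix.one_mul, Matrix.trace_diagonal]
  rfl

lemma trace_mul_conjTranspose_self (A : Matrix m n ℂ) :
    (A * Aᴴ).trace = ((frobSq A : ℝ) : ℂ) := by
  unfold frobSq
  rw [Matrix.trace]
  push_cast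
  refine Finset.sum_congr rfl fun p _ => ?_
  rw [Matrix.diag_apply, mul_apply]
  refine Finset.sum_congr rfl fun q _ => ?_
  rw [conjTranspose_apply, RCLike.star_def, Complex.mul_conj]

lemma sum_eigs_AAH (A : Matrix m n ℂ) :
    ∑ k, (isHermitian_mul_conjTranspose_self A).eigenvalues k = frobSq A := by
  have h := trace_eq_sum_eigenvalues (isHermitian_mul_conjTranspose_self A)
  rw [trace_mul_conjTranspose_self A] at h
  exact_mod_cast h.symm

lemma singSum_nonneg (A : Matrix m n ℂ) : 0 ≤ singSum A :=
  Finset.sum_nonneg fun _ _ => Real.sqrt_nonneg _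

lemma singSum_le_sqrt_card_mul (A : Matrix m n ℂ) :
    singSum A ≤ Real.sqrt (Fintype.card m) * Real.sqrt (frobSq A) := by
  have hnn : ∀ k, 0 ≤ (isHermitian_mul_conjTranspose_self A).eigenvalues k := fun k =>
    (posSemidef_self_mul_conjTranspose A).eigenvalues_nonneg k
  have hsq : (singSum A) ^ 2 ≤ (Fintype.card m : ℝ) * frobSq A := by
    unfold singSum
    calc (∑ k, Real.sqrt ((isHermitian_mul_conjTranspose_self A).eigenvalues k)) ^ 2
        ≤ (Finset.univ : Finset m).card
            * ∑ k, (Real.sqrt ((isHermitian_mul_conjTranspose_self A).eigenvalues k)) ^ 2 :=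
          sq_sum_le_card_mul_sum_sq
      _ = (Fintype.card m : ℝ) * frobSq A := by
          rw [Finset.card_univ, ← sum_eigs_AAH A]
          congr 1
          exact Finset.sum_congr rfl fun k _ => Real.sq_sqrt (hnn k)
  calc singSum A = Real.sqrt ((singSum A) ^ 2) := (Real.sqrt_sq (singSum_nonneg A)).symm
    _ ≤ Real.sqrt ((Fintype.card m : ℝ) * frobSq A) := Real.sqrt_le_sqrt hsq
    _ = Real.sqrt (Fintype.card m) * Real.sqrt (frobSq A) :=
        Real.sqrt_mul (by positivity) _

lemma frobSq_le_one_of_density {M : Matrix m m ℂ}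
    (hpsd : M.PosSemidef) (htr : M.trace = 1) : frobSq M ≤ 1 := by
  have hHerm : M.IsHermitian := hpsd.1
  set U : Matrix m m ℂ := (hHerm.eigenvectorUnitary : Matrix m m ℂ) with hU
  set D : Matrix m m ℂ := diagonal (RCLike.ofReal ∘ hHerm.eigenvalues) with hD
  have hMM : M * M = U * (D * D) * star U := by
    have h1 : star U * U = 1 := Matrix.mem_unitaryGroup_iff'.mp (hHerm.eigenvectorUnitary).2
    have hs : M = U * D * star U := hHerm.spectral_theorem
    calc M * M = U * D * star U * (U * D * star U) := by rw [← hs]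
      _ = U * D * ((star U * U) * (D * star U)) := by
          simp only [Matrix.mul_assoc]
      _ = U * (D * D) * star U := by rw [h1, Matrix.one_mul]; simp only [Matrix.mul_assoc]
  have htr2 : (M * M).trace = ∑ i, ((hHerm.eigenvalues i : ℂ)) ^ 2 := by
    rw [hMM, Matrix.trace_mul_cycle, ← Matrix.mul_assoc,
      Matrix.mem_unitaryGroup_iff'.mp (hHerm.eigenvectorUnitary).2, Matrix.one_mul, hD,
      diagonal_mul_diagonal, Matrix.trace_diagonal]
    refine Finset.sum_congr rfl fun i _ => ?_
    simp [sq]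
  have hfr : ((frobSq M : ℝ) : ℂ) = ∑ i, ((hHerm.eigenvalues i : ℂ)) ^ 2 := by
    have h0 := trace_mul_conjTranspose_self M
    rw [hHerm.eq] at h0
    exact h0.symm.trans htr2
  have hfr2 : frobSq M = ∑ i, (hHerm.eigenvalues i) ^ 2 := by
    have : ((frobSq M : ℝ) : ℂ) = ((∑ i, (hHerm.eigenvalues i) ^ 2 : ℝ) : ℂ) := by
      rw [hfr]; push_cast; ring
    exact_mod_cast this
  have hsum : ∑ i, hHerm.eigenvalues i = 1 := by
    have h := trace_eq_sum_eigenvalues hHerm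
    rw [htr] at h
    have : ((∑ i, hHerm.eigenvalues i : ℝ) : ℂ) = ((1 : ℝ) : ℂ) := by
      push_cast
      exact h.symm
    exact_mod_cast this
  have hnn : ∀ i, 0 ≤ hHerm.eigenvalues i := fun i => hpsd.eigenvalues_nonneg i
  calc frobSq M = ∑ i, (hHerm.eigenvalues i) ^ 2 := hfr2
    _ ≤ (∑ i, hHerm.eigenvalues i) ^ 2 :=
        Finset.sum_sq_le_sq_sum_of_nonneg fun i _ => hnn i
    _ = 1 := by rw [hsum]; norm_num

lemma frobSq_rankOne (u : m → ℂ) (v : n → ℂ) :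
    frobSq (Matrix.of fun p q => u p * v q) = nsq u * nsq v := by
  unfold frobSq nsq
  rw [Finset.sum_mul]
  refine Finset.sum_congr rfl fun p _ => ?_
  rw [Finset.mul_sum]
  refine Finset.sum_congr rfl fun q _ => ?_
  rw [Matrix.of_apply, Complex.normSq_mul]

lemma singSum_rankOne (u : m → ℂ) (v : n → ℂ) :
    singSum (Matrix.of fun p q => u p * v q) ≤ Real.sqrt (nsq u * nsq v) := by
  classical
  set A : Matrix m n ℂ := Matrix.of fun p q => u p * v q with hAdef
  set hH := isHermitian_mul_conjTranspose_self A with hHdef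
  set lam := hH.eigenvalues with hlamdef
  have hnn : ∀ k, 0 ≤ lam k := fun k =>
    (posSemidef_self_mul_conjTranspose A).eigenvalues_nonneg k
  set t : ℝ := nsq u * nsq v with ht
  have htnn : 0 ≤ t := mul_nonneg (nsq_nonneg u) (nsq_nonneg v)
  have hHentry : ∀ p p', (A * Aᴴ) p p' = ((nsq v : ℝ) : ℂ) * (u p * star (u p')) := by
    intro p p'
    rw [mul_apply]
    have : ∀ q, A p q * Aᴴ q p' = (u p * star (u p')) * ((v q) * star (v q)) := by
      intro q
      rw [conjTranspose_apply, hAdef, Matrix.of_apply, Matrix.of_apply, star_mul']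
      ring
    rw [Finset.sum_congr rfl fun q _ => this q, ← Finset.mul_sum]
    have hv : ∑ q, v q * star (v q) = ((nsq v : ℝ) : ℂ) := by
      unfold nsq
      push_cast
      refine Finset.sum_congr rfl fun q _ => ?_
      rw [RCLike.star_def, Complex.mul_conj]
    rw [hv]
    ring
  have hHH : (A * Aᴴ) * (A * Aᴴ) = ((t : ℝ) : ℂ) • (A * Aᴴ) := by
    ext p p'
    rw [mul_apply, Matrix.smul_apply, hHentry p p']
    have : ∀ r, (A * Aᴴ) p r * (A * Aᴴ) r p'
        = ((nsq v : ℝ) : ℂ) * ((nsq v : ℝ) : ℂ) * (u p * star (u p')) * (star (u r) * u r) := by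
      intro r
      rw [hHentry p r, hHentry r p']
      ring
    rw [Finset.sum_congr rfl fun r _ => this r, ← Finset.mul_sum]
    have hu : ∑ r, star (u r) * u r = ((nsq u : ℝ) : ℂ) := by
      unfold nsq
      push_cast
      refine Finset.sum_congr rfl fun r _ => ?_
      rw [RCLike.star_def, mul_comm, Complex.mul_conj]
    rw [hu, smul_eq_mul, ht]
    push_cast
    ring
  -- eigenvalue dichotomy
  have hdich : ∀ k, lam k * lam k = t * lam k := by
    intro k
    set z : m → ℂ := ⇑(hH.eigenvectorBasis k) with hz
    have heig : (A * Aᴴ) *ᵥ z = ((lam k : ℝ) : ℂ) • z := by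
      have := hH.mulVec_eigenvectorBasis k
      convert this using 1
      exact (RCLike.real_smul_eq_coe_smul (K := ℂ) _ _).symm
    have hz1 : star z ⬝ᵥ z = 1 := by
      have := hH.eigenvectorBasis.orthonormal
      rw [orthonormal_iff_ite] at this
      have h := this k k
      rw [EuclideanSpace.inner_eq_star_dotProduct, dotProduct_comm] at h
      simpa using h
    have hzne : z ≠ 0 := by
      intro h0
      rw [h0] at hz1
      simp at hz1
    obtain ⟨p, hp⟩ : ∃ p, z p ≠ 0 := by
      by_contra h
      push_neg at h
      exact hzne (funext fun p => h p)
    have h2 : ((A * Aᴴ) * (A * Aᴴ)) *ᵥ z = (((lam k * lam k : ℝ)) : ℂ) • z := by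
      rw [← mulVec_mulVec, heig, Matrix.mulVec_smul, heig, smul_smul]
      push_cast
      ring_nf
    have h3 : ((A * Aᴴ) * (A * Aᴴ)) *ᵥ z = (((t * lam k : ℝ)) : ℂ) • z := by
      rw [hHH, smul_mulVec, heig, smul_smul]
      push_cast
      ring_nf
    have h4 : (((lam k * lam k : ℝ)) : ℂ) * z p = (((t * lam k : ℝ)) : ℂ) * z p := by
      have := h2.symm.trans h3
      have hcoord := congrFun this p
      simpa [Pi.smul_apply, smul_eq_mul] using hcoord
    have h5 : (((lam k * lam k : ℝ)) : ℂ) = (((t * lam k : ℝ)) : ℂ) :=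
      mul_right_cancel₀ hp h4
    exact_mod_cast h5
  have htrace : ∑ k, lam k = t := by
    rw [hlamdef, hHdef, sum_eigs_AAH, hAdef, frobSq_rankOne, ht]
  by_cases htz : t = 0
  · have hall : ∀ k, lam k = 0 := by
      intro k
      have := hdich k
      rw [htz, zero_mul] at this
      exact mul_self_eq_zero.mp this
    have hrw : singSum A = ∑ k, Real.sqrt (lam k) := rfl
    rw [hrw]
    calc ∑ k, Real.sqrt (lam k) = 0 := by
          refine Finset.sum_eq_zero fun k _ => ?_
          rw [hall k, Real.sqrt_zero]
      _ ≤ _ := Real.sqrt_nonneg _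
  · have htpos : 0 < t := lt_of_le_of_ne htnn (Ne.symm htz)
    have hstpos : 0 < Real.sqrt t := Real.sqrt_pos.mpr htpos
    have hle : ∀ k, Real.sqrt (lam k) ≤ lam k / Real.sqrt t := by
      intro k
      have := hdich k
      rcases mul_eq_zero.mp (by linarith [this] : lam k * (lam k - t) = 0) with h | h
      · rw [h, Real.sqrt_zero, zero_div]
      · have hkt : lam k = t := by linarith
        rw [hkt, le_div_iff₀ hstpos]
        exact le_of_eq (Real.mul_self_sqrt htnn)
    calc singSum A ≤ ∑ k, lam k / Real.sqrt t := Finset.sum_le_sum fun k _ => hle k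
      _ = (∑ k, lam k) / Real.sqrt t := by rw [Finset.sum_div]
      _ = t / Real.sqrt t := by rw [htrace]
      _ = Real.sqrt t := by
          rw [eq_comm, eq_div_iff (ne_of_gt hstpos), Real.mul_self_sqrt htnn]

end KyFanAux

section Glue

open KyFanAux

variable {d : ℕ}

lemma frobSq_kron {m₁ n₁ m₂ n₂ : Type*} [Fintype m₁] [Fintype n₁] [Fintype m₂] [Fintype n₂]
    (B : Matrix m₁ n₁ ℂ) (C : Matrix m₂ n₂ ℂ) :
    frobSq (Matrix.of fun (x : m₁ × m₂) (y : n₁ × n₂) => B x.1 y.1 * C x.2 y.2)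
      = frobSq B * frobSq C := by
  unfold frobSq
  simp only [Matrix.of_apply, Complex.normSq_mul, Fintype.sum_prod_type]
  have step : ∀ x1, (∑ x2 : m₂, ∑ y1 : n₁, ∑ y2 : n₂,
      Complex.normSq (B x1 y1) * Complex.normSq (C x2 y2))
      = (∑ y1, Complex.normSq (B x1 y1)) * (∑ x2, ∑ y2, Complex.normSq (C x2 y2)) := by
    intro x1
    rw [Finset.sum_comm, Finset.sum_mul]
    refine Finset.sum_congr rfl fun y1 _ => ?_
    rw [Finset.mul_sum]
    refine Finset.sum_congr rfl fun x2 _ => ?_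
    rw [Finset.mul_sum]
  rw [Finset.sum_congr rfl fun x1 _ => step x1, ← Finset.sum_mul]

lemma frobSq_comp {m n m' n' : Type*} [Fintype m] [Fintype n] [Fintype m'] [Fintype n']
    (e : m' ≃ m) (f : n' ≃ n) (A : Matrix m n ℂ) :
    frobSq (Matrix.of fun p q => A (e p) (f q)) = frobSq A := by
  unfold frobSq
  simp only [Matrix.of_apply]
  calc ∑ p, ∑ q, Complex.normSq (A (e p) (f q))
      = ∑ p, ∑ q, Complex.normSq (A (e p) q) :=
        Finset.sum_congr rfl fun p _ => Equiv.sum_comp f (fun q => Complex.normSq (A (e p) q))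
    _ = ∑ p, ∑ q, Complex.normSq (A p q) :=
        Equiv.sum_comp e (fun p => ∑ q, Complex.normSq (A p q))

lemma frobSq_realign {X Y : Type*} [Fintype X] [Fintype Y] (ρ : Matrix (X × Y) (X × Y) ℂ) :
    frobSq (realign ρ) = frobSq ρ := by
  unfold frobSq realign
  simp only [Matrix.of_apply, Fintype.sum_prod_type]
  exact Finset.sum_congr rfl fun x _ => Finset.sum_comm

def eBAC (d : ℕ) : (Fin d × Fin d × Fin d) ≃ (Fin d × Fin d × Fin d) where
  toFun x := (x.2.1, x.1, x.2.2)
  invFun x := (x.2.1, x.1, x.2.2)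
  left_inv := fun ⟨a, b, c⟩ => rfl
  right_inv := fun ⟨a, b, c⟩ => rfl

def eCAB (d : ℕ) : (Fin d × Fin d × Fin d) ≃ (Fin d × Fin d × Fin d) where
  toFun x := (x.2.1, x.2.2, x.1)
  invFun x := (x.2.2, x.1, x.2.1)
  left_inv := fun ⟨a, b, c⟩ => rfl
  right_inv := fun ⟨a, b, c⟩ => rfl

lemma frobSq_reindexBAC (ρ : Matrix (Fin d × Fin d × Fin d) (Fin d × Fin d × Fin d) ℂ) :
    frobSq (reindexBAC ρ) = frobSq ρ :=
  frobSq_comp (eBAC d) (eBAC d) ρ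

lemma frobSq_reindexCAB (ρ : Matrix (Fin d × Fin d × Fin d) (Fin d × Fin d × Fin d) ℂ) :
    frobSq (reindexCAB ρ) = frobSq ρ :=
  frobSq_comp (eCAB d) (eCAB d) ρ

lemma nsq_uncurry {X Y : Type*} [Fintype X] [Fintype Y] (M : Matrix X Y ℂ) :
    nsq (fun p : X × Y => M p.1 p.2) = frobSq M := by
  unfold nsq frobSq
  rw [Fintype.sum_prod_type]

lemma realign_sum {X Y ι : Type*} [Fintype X] [Fintype Y] (s : Finset ι) (c : ι → ℂ)
    (τ : ι → Matrix (X × Y) (X × Y) ℂ) :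
    realign (∑ i ∈ s, c i • τ i) = ∑ i ∈ s, c i • realign (τ i) := by
  ext p q
  simp [realign, Matrix.sum_apply, Matrix.smul_apply]

lemma reindexBAC_sum {ι : Type*} (s : Finset ι) (c : ι → ℂ)
    (τ : ι → Matrix (Fin d × Fin d × Fin d) (Fin d × Fin d × Fin d) ℂ) :
    reindexBAC (∑ i ∈ s, c i • τ i) = ∑ i ∈ s, c i • reindexBAC (τ i) := by
  ext p q
  simp [reindexBAC, Matrix.sum_apply, Matrix.smul_apply]

lemma reindexCAB_sum {ι : Type*} (s : Finset ι) (c : ι → ℂ)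
    (τ : ι → Matrix (Fin d × Fin d × Fin d) (Fin d × Fin d × Fin d) ℂ) :
    reindexCAB (∑ i ∈ s, c i • τ i) = ∑ i ∈ s, c i • reindexCAB (τ i) := by
  ext p q
  simp [reindexCAB, Matrix.sum_apply, Matrix.smul_apply]

lemma singSum_realign_le (σ : Matrix (Fin d × Fin d × Fin d) (Fin d × Fin d × Fin d) ℂ)
    (h : frobSq σ ≤ 1) : singSum (realign σ) ≤ (d : ℝ) := by
  refine (singSum_le_sqrt_card_mul _).trans ?_
  have h1 : Real.sqrt ((Fintype.card (Fin d × Fin d) : ℝ)) = (d : ℝ) := by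
    have : ((Fintype.card (Fin d × Fin d) : ℕ) : ℝ) = (d : ℝ) * (d : ℝ) := by
      rw [Fintype.card_prod, Fintype.card_fin]
      push_cast
      ring
    rw [this, Real.sqrt_mul_self (Nat.cast_nonneg d)]
  have h2 : Real.sqrt (frobSq (realign σ)) ≤ 1 := by
    rw [frobSq_realign σ]
    calc Real.sqrt (frobSq σ) ≤ Real.sqrt 1 := Real.sqrt_le_sqrt h
      _ = 1 := Real.sqrt_one
  calc Real.sqrt ((Fintype.card (Fin d × Fin d) : ℝ)) * Real.sqrt (frobSq (realign σ))
      ≤ (d : ℝ) * 1 :=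
        mul_le_mul (le_of_eq h1) h2 (Real.sqrt_nonneg _) (Nat.cast_nonneg d)
    _ = (d : ℝ) := mul_one _

lemma singSum_realign_prodA_le_one (M₁ : Matrix (Fin d) (Fin d) ℂ)
    (M₂ : Matrix (Fin d × Fin d) (Fin d × Fin d) ℂ)
    (h₁ : frobSq M₁ ≤ 1) (h₂ : frobSq M₂ ≤ 1) :
    singSum (realign (prodA_BC M₁ M₂)) ≤ 1 := by
  have hfr1 : 0 ≤ frobSq M₁ := frobSq_nonneg M₁
  have hfr2 : 0 ≤ frobSq M₂ := frobSq_nonneg M₂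
  have heq : realign (prodA_BC M₁ M₂)
      = Matrix.of (fun p q => (fun p : Fin d × Fin d => M₁ p.1 p.2) p
          * (fun q : (Fin d × Fin d) × (Fin d × Fin d) => M₂ q.1 q.2) q) := rfl
  rw [heq]
  refine (singSum_rankOne _ _).trans ?_
  rw [nsq_uncurry, nsq_uncurry]
  calc Real.sqrt (frobSq M₁ * frobSq M₂) ≤ Real.sqrt 1 := by
        refine Real.sqrt_le_sqrt ?_
        nlinarith
    _ = 1 := Real.sqrt_one

lemma per_term (τ : Matrix (Fin d × Fin d × Fin d) (Fin d × Fin d × Fin d) ℂ)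
    (M₁ : Matrix (Fin d) (Fin d) ℂ) (M₂ : Matrix (Fin d × Fin d) (Fin d × Fin d) ℂ)
    (hM₁ : IsDensity M₁) (hM₂ : IsDensity M₂)
    (hcase : τ = prodA_BC M₁ M₂ ∨ τ = prodB_AC M₁ M₂ ∨ τ = prodC_AB M₁ M₂) :
    singSum (realign τ) + singSum (realign (reindexBAC τ))
      + singSum (realign (reindexCAB τ)) ≤ 2 * (d : ℝ) + 1 := by
  have hf1 : frobSq M₁ ≤ 1 := frobSq_le_one_of_density hM₁.1 hM₁.2
  have hf2 : frobSq M₂ ≤ 1 := frobSq_le_one_of_density hM₂.1 hM₂.2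
  have hfr1 : 0 ≤ frobSq M₁ := frobSq_nonneg M₁
  have hfr2 : 0 ≤ frobSq M₂ := frobSq_nonneg M₂
  have hprodA : frobSq (prodA_BC M₁ M₂) ≤ 1 := by
    have : frobSq (prodA_BC M₁ M₂) = frobSq M₁ * frobSq M₂ := frobSq_kron M₁ M₂
    rw [this]
    nlinarith
  rcases hcase with h | h | h
  · -- aligned with A|BC
    have hτ : frobSq τ ≤ 1 := by rw [h]; exact hprodA
    have b1 : singSum (realign τ) ≤ 1 := by
      rw [h]
      exact singSum_realign_prodA_le_one M₁ M₂ hf1 hf2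
    have b2 : singSum (realign (reindexBAC τ)) ≤ (d : ℝ) :=
      singSum_realign_le _ (by rw [frobSq_reindexBAC]; exact hτ)
    have b3 : singSum (realign (reindexCAB τ)) ≤ (d : ℝ) :=
      singSum_realign_le _ (by rw [frobSq_reindexCAB]; exact hτ)
    linarith
  · -- aligned with B|AC
    have hBAC : reindexBAC τ = prodA_BC M₁ M₂ := by
      rw [h]
      ext ⟨a, b, c⟩ ⟨a', b', c'⟩
      rfl
    have hτ : frobSq τ ≤ 1 := by
      rw [← frobSq_reindexBAC τ, hBAC]
      exact hprodA
    have b1 : singSum (realign τ) ≤ (d : ℝ) := singSum_realign_le _ hτ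
    have b2 : singSum (realign (reindexBAC τ)) ≤ 1 := by
      rw [hBAC]
      exact singSum_realign_prodA_le_one M₁ M₂ hf1 hf2
    have b3 : singSum (realign (reindexCAB τ)) ≤ (d : ℝ) :=
      singSum_realign_le _ (by rw [frobSq_reindexCAB]; exact hτ)
    linarith
  · -- aligned with C|AB
    have hCAB : reindexCAB τ = prodA_BC M₁ M₂ := by
      rw [h]
      ext ⟨a, b, c⟩ ⟨a', b', c'⟩
      rfl
    have hτ : frobSq τ ≤ 1 := by
      rw [← frobSq_reindexCAB τ, hCAB]
      exact hprodA
    have b1 : singSum (realign τ) ≤ (d : ℝ) := singSum_realign_le _ hτ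
    have b2 : singSum (realign (reindexBAC τ)) ≤ (d : ℝ) :=
      singSum_realign_le _ (by rw [frobSq_reindexBAC]; exact hτ)
    have b3 : singSum (realign (reindexCAB τ)) ≤ 1 := by
      rw [hCAB]
      exact singSum_realign_prodA_le_one M₁ M₂ hf1 hf2
    linarith

end Glue

/-- For a biseparable tripartite density matrix `ρ` on `(Fin d)³` — a convex combination
of density matrices each of which is a product across one of the bipartitions `A|BC`,
`B|AC`, `C|AB` — the sum over the three bipartitions of any partial sums of at most `d²`
singular values of the corresponding realignments is at most `2d + 1`; equivalently, the
sum of the three Ky Fan `d²`-norms of the realignments is at most `2d + 1`. -/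
theorem biseparable_realign_kyFan_sum_le {d : ℕ} {ι : Type*} (s : Finset ι)
    (p : ι → ℝ) (τ : ι → Matrix (Fin d × Fin d × Fin d) (Fin d × Fin d × Fin d) ℂ)
    (hp : ∀ i ∈ s, 0 ≤ p i) (hpsum : ∑ i ∈ s, p i = 1)
    (hbisep : ∀ i ∈ s, ∃ (M₁ : Matrix (Fin d) (Fin d) ℂ)
      (M₂ : Matrix (Fin d × Fin d) (Fin d × Fin d) ℂ), IsDensity M₁ ∧ IsDensity M₂ ∧
        (τ i = prodA_BC M₁ M₂ ∨ τ i = prodB_AC M₁ M₂ ∨ τ i = prodC_AB M₁ M₂))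
    (ρ : Matrix (Fin d × Fin d × Fin d) (Fin d × Fin d × Fin d) ℂ)
    (hρ : ρ = ∑ i ∈ s, (p i : ℂ) • τ i)
    (h₁ : (realign ρ * (realign ρ)ᴴ).IsHermitian)
    (h₂ : (realign (reindexBAC ρ) * (realign (reindexBAC ρ))ᴴ).IsHermitian)
    (h₃ : (realign (reindexCAB ρ) * (realign (reindexCAB ρ))ᴴ).IsHermitian)
    (S₁ S₂ S₃ : Finset (Fin d × Fin d))
    (hS₁ : S₁.card ≤ d ^ 2) (hS₂ : S₂.card ≤ d ^ 2) (hS₃ : S₃.card ≤ d ^ 2) :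
    (∑ i ∈ S₁, Real.sqrt (h₁.eigenvalues i)) +
        (∑ i ∈ S₂, Real.sqrt (h₂.eigenvalues i)) +
        (∑ i ∈ S₃, Real.sqrt (h₃.eigenvalues i)) ≤
      2 * (d : ℝ) + 1 := by
  classical
  open KyFanAux in
  have hnn1 : ∑ i ∈ S₁, Real.sqrt (h₁.eigenvalues i) ≤ singSum (realign ρ) :=
    Finset.sum_le_sum_of_subset_of_nonneg (Finset.subset_univ S₁)
      (fun i _ _ => Real.sqrt_nonneg _)
  have hnn2 : ∑ i ∈ S₂, Real.sqrt (h₂.eigenvalues i) ≤ singSum (realign (reindexBAC ρ)) :=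
    Finset.sum_le_sum_of_subset_of_nonneg (Finset.subset_univ S₂)
      (fun i _ _ => Real.sqrt_nonneg _)
  have hnn3 : ∑ i ∈ S₃, Real.sqrt (h₃.eigenvalues i) ≤ singSum (realign (reindexCAB ρ)) :=
    Finset.sum_le_sum_of_subset_of_nonneg (Finset.subset_univ S₃)
      (fun i _ _ => Real.sqrt_nonneg _)
  have hsplit1 : singSum (realign ρ) ≤ ∑ i ∈ s, p i * singSum (realign (τ i)) := by
    rw [hρ, realign_sum]
    exact singSum_sum_smul_le s p hp _
  have hsplit2 : singSum (realign (reindexBAC ρ))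
      ≤ ∑ i ∈ s, p i * singSum (realign (reindexBAC (τ i))) := by
    rw [hρ, reindexBAC_sum, realign_sum]
    exact singSum_sum_smul_le s p hp _
  have hsplit3 : singSum (realign (reindexCAB ρ))
      ≤ ∑ i ∈ s, p i * singSum (realign (reindexCAB (τ i))) := by
    rw [hρ, reindexCAB_sum, realign_sum]
    exact singSum_sum_smul_le s p hp _
  have hterm : ∀ i ∈ s,
      singSum (realign (τ i)) + singSum (realign (reindexBAC (τ i)))
        + singSum (realign (reindexCAB (τ i))) ≤ 2 * (d : ℝ) + 1 := by
    intro i hi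
    obtain ⟨M₁, M₂, hM₁, hM₂, hcase⟩ := hbisep i hi
    exact per_term (τ i) M₁ M₂ hM₁ hM₂ hcase
  have hcomb : ∑ i ∈ s, p i * singSum (realign (τ i))
      + ∑ i ∈ s, p i * singSum (realign (reindexBAC (τ i)))
      + ∑ i ∈ s, p i * singSum (realign (reindexCAB (τ i)))
      ≤ 2 * (d : ℝ) + 1 := by
    have : ∑ i ∈ s, p i * singSum (realign (τ i))
        + ∑ i ∈ s, p i * singSum (realign (reindexBAC (τ i)))
        + ∑ i ∈ s, p i * singSum (realign (reindexCAB (τ i)))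
        = ∑ i ∈ s, p i * (singSum (realign (τ i)) + singSum (realign (reindexBAC (τ i)))
            + singSum (realign (reindexCAB (τ i)))) := by
      rw [← Finset.sum_add_distrib, ← Finset.sum_add_distrib]
      exact Finset.sum_congr rfl fun i _ => by ring
    rw [this]
    calc ∑ i ∈ s, p i * (singSum (realign (τ i)) + singSum (realign (reindexBAC (τ i)))
            + singSum (realign (reindexCAB (τ i))))
        ≤ ∑ i ∈ s, p i * (2 * (d : ℝ) + 1) :=
          Finset.sum_le_sum fun i hi =>
            mul_le_mul_of_nonneg_left (hterm i hi) (hp i hi)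
      _ = 2 * (d : ℝ) + 1 := by rw [← Finset.sum_mul, hpsum, one_mul]
  linarith
end Aux
end
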